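/- Removing a dominated Right option preserves equality: if G = {A, B, C, …| G^S | D, E, F, …} with D ≤ E, then G'' = {A, B, C, …| G^S | D, F, …} satisfies G'' = G. -/

import Mathlib

inductive SGame : Type where
  | mk (left right : List SGame) (score : ℝ)

namespace SGame

def leftOpts : SGame → List SGame | mk L _ _ => L
def rightOpts : SGame → List SGame | mk _ R _ => R
def score : SGame → ℝ | mk _ _ s => s

mutual
  /-- Optimal final score when Left moves first. -/
  def leftScore : SGame → ℝ
    | mk [] _ s => s
    | mk (g :: L) _ _ => maxRight g L
  termination_by G => sizeOf G
  decreasing_by all_goals (simp; try omega)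
  def maxRight : SGame → List SGame → ℝ
    | g, [] => rightScore g
    | g, h :: t => max (rightScore g) (maxRight h t)
  termination_by g l => 1 + sizeOf g + sizeOf l
  decreasing_by all_goals (simp; try omega)
  /-- Optimal final score when Right moves first. -/
  def rightScore : SGame → ℝ
    | mk _ [] s => s
    | mk _ (g :: R) _ => minLeft g R
  termination_by G => sizeOf G
  decreasing_by all_goals (simp; try omega)
  def minLeft : SGame → List SGame → ℝ
    | g, [] => leftScore g
    | g, h :: t => min (leftScore g) (minLeft h t)
  termination_by g l => 1 + sizeOf g + sizeOf l
  decreasing_by all_goals (simp; try omega)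
end

/-- Long-rule disjunctive sum. -/
def sum : SGame → SGame → SGame
  | mk L1 R1 s1, mk L2 R2 s2 =>
    mk ((L1.attach.map fun g => sum g.1 (mk L2 R2 s2)) ++
        (L2.attach.map fun h => sum (mk L1 R1 s1) h.1))
       ((R1.attach.map fun g => sum g.1 (mk L2 R2 s2)) ++
        (R2.attach.map fun h => sum (mk L1 R1 s1) h.1))
       (s1 + s2)
termination_by G H => sizeOf G + sizeOf H
decreasing_by
  all_goals simp
  · have := List.sizeOf_lt_of_mem g.2; omega
  · have := List.sizeOf_lt_of_mem h.2; omega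
  · have := List.sizeOf_lt_of_mem g.2; omega
  · have := List.sizeOf_lt_of_mem h.2; omega

end SGame

namespace SGame

/-- The game `{.|0|.}`. -/
def zero : SGame := mk [] [] 0

/-- Negation: `-G = {-G^R | -G^S | -G^L}`. -/
def neg : SGame → SGame
  | mk L R s =>
    mk (R.attach.map fun g => neg g.1) (L.attach.map fun g => neg g.1) (-s)
termination_by G => sizeOf G
decreasing_by
  all_goals (have := List.sizeOf_lt_of_mem g.2; simp; omega)

/-- Identity of game trees (options regarded as sets). -/
def Ident : SGame → SGame → Prop
  | mk L1 R1 s1, mk L2 R2 s2 =>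
    s1 = s2 ∧
    (∀ g ∈ L1.attach, ∃ h ∈ L2.attach, Ident g.1 h.1) ∧
    (∀ h ∈ L2.attach, ∃ g ∈ L1.attach, Ident g.1 h.1) ∧
    (∀ g ∈ R1.attach, ∃ h ∈ R2.attach, Ident g.1 h.1) ∧
    (∀ h ∈ R2.attach, ∃ g ∈ R1.attach, Ident g.1 h.1)
termination_by G H => sizeOf G + sizeOf H
decreasing_by
  all_goals
    (have := List.sizeOf_lt_of_mem g.2; have := List.sizeOf_lt_of_mem h.2
     simp; omega)

inductive Outcome : Type where
  | L | R | N | P | T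
deriving DecidableEq

/-- The outcome class of a game, determined by the signs of its final scores. -/
noncomputable def outcome (G : SGame) : Outcome :=
  if 0 < G.leftScore then
    (if 0 < G.rightScore then .L else if G.rightScore = 0 then .L else .N)
  else if G.leftScore = 0 then
    (if 0 < G.rightScore then .L else if G.rightScore = 0 then .T else .R)
  else
    (if 0 < G.rightScore then .P else .R)

/-- `G ≥ H`. -/
def Ge (G H : SGame) : Prop :=
  ∀ X : SGame,
    (0 ≤ (H.sum X).leftScore → 0 ≤ (G.sum X).leftScore) ∧
    (0 ≤ (H.sum X).rightScore → 0 ≤ (G.sum X).rightScore) ∧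
    (0 < (H.sum X).leftScore → 0 < (G.sum X).leftScore) ∧
    (0 < (H.sum X).rightScore → 0 < (G.sum X).rightScore)

/-- `G ≤ H`. -/
def Le (G H : SGame) : Prop :=
  ∀ X : SGame,
    ((H.sum X).leftScore ≤ 0 → (G.sum X).leftScore ≤ 0) ∧
    ((H.sum X).rightScore ≤ 0 → (G.sum X).rightScore ≤ 0) ∧
    ((H.sum X).leftScore < 0 → (G.sum X).leftScore < 0) ∧
    ((H.sum X).rightScore < 0 → (G.sum X).rightScore < 0)

/-- Game equality: same outcome in every disjunctive-sum context. -/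
def gameEq (G H : SGame) : Prop :=
  ∀ X : SGame, (G.sum X).outcome = (H.sum X).outcome

end SGame

namespace SGame

/-- Every score in the game tree of `G` satisfies `p`. -/
def AllScores (p : ℝ → Prop) : SGame → Prop
  | mk L R s =>
    p s ∧ (∀ g ∈ L.attach, AllScores p g.1) ∧ (∀ g ∈ R.attach, AllScores p g.1)
termination_by G => sizeOf G
decreasing_by all_goals (have := List.sizeOf_lt_of_mem g.2; simp; omega)

/-- `G ≡ H`: identical underlying game trees, with equal scores at all
termination vertices (vertices at which at least one player has no option,
i.e. where the play of some disjunctive sum can end). -/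
def Equiv : SGame → SGame → Prop
  | mk L1 R1 s1, mk L2 R2 s2 =>
    ((L1 = [] ∨ R1 = []) → s1 = s2) ∧
    (∀ g ∈ L1.attach, ∃ h ∈ L2.attach, Equiv g.1 h.1) ∧
    (∀ h ∈ L2.attach, ∃ g ∈ L1.attach, Equiv g.1 h.1) ∧
    (∀ g ∈ R1.attach, ∃ h ∈ R2.attach, Equiv g.1 h.1) ∧
    (∀ h ∈ R2.attach, ∃ g ∈ R1.attach, Equiv g.1 h.1)
termination_by G H => sizeOf G + sizeOf H
decreasing_by
  all_goals
    (have := List.sizeOf_lt_of_mem g.2; have := List.sizeOf_lt_of_mem h.2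
     simp; omega)

/-- `G` is in canonical form: hereditarily, no dominated and no reversible options. -/
def Canonical : SGame → Prop
  | mk L R s =>
    (∀ A ∈ L, ∀ B ∈ L, A ≠ B → ¬ Ge A B) ∧
    (∀ D ∈ R, ∀ E ∈ R, D ≠ E → ¬ Le D E) ∧
    (∀ A ∈ L, ∀ Ar ∈ A.rightOpts, ¬ Le Ar (mk L R s)) ∧
    (∀ D ∈ R, ∀ Dl ∈ D.leftOpts, ¬ Ge Dl (mk L R s)) ∧
    (∀ g ∈ L.attach, Canonical g.1) ∧ (∀ g ∈ R.attach, Canonical g.1)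
termination_by G => sizeOf G
decreasing_by all_goals (have := List.sizeOf_lt_of_mem g.2; simp; omega)

/-- One reduction step: removing a dominated option or bypassing a reversible
option, at the root or in some subposition. -/
inductive Step : SGame → SGame → Prop where
  | domL {L1 L2 : List SGame} {R : List SGame} {s : ℝ} {B : SGame} (A : SGame)
      (hA : A ∈ L1 ++ L2) (h : Ge A B) :
      Step (mk (L1 ++ B :: L2) R s) (mk (L1 ++ L2) R s)
  | domR {R1 R2 : List SGame} {L : List SGame} {s : ℝ} {E : SGame} (D : SGame)
      (hD : D ∈ R1 ++ R2) (h : Le D E) :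
      Step (mk L (R1 ++ E :: R2) s) (mk L (R1 ++ R2) s)
  | revL {L1 L2 : List SGame} {R : List SGame} {s : ℝ} {A Ar : SGame}
      (hAr : Ar ∈ A.rightOpts) (h : Le Ar (mk (L1 ++ A :: L2) R s)) :
      Step (mk (L1 ++ A :: L2) R s) (mk (L1 ++ Ar.leftOpts ++ L2) R s)
  | revR {R1 R2 : List SGame} {L : List SGame} {s : ℝ} {D Dl : SGame}
      (hDl : Dl ∈ D.leftOpts) (h : Ge Dl (mk L (R1 ++ D :: R2) s)) :
      Step (mk L (R1 ++ D :: R2) s) (mk L (R1 ++ Dl.rightOpts ++ R2) s)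
  | congL {g g' : SGame} {L1 L2 R : List SGame} {s : ℝ} (h : Step g g') :
      Step (mk (L1 ++ g :: L2) R s) (mk (L1 ++ g' :: L2) R s)
  | congR {g g' : SGame} {L R1 R2 : List SGame} {s : ℝ} (h : Step g g') :
      Step (mk L (R1 ++ g :: R2) s) (mk L (R1 ++ g' :: R2) s)

end SGame

/-!
Membership of a score in a lower set `S` of `ℝ` (here `Iic 0` or `Iio 0`) follows the recursion
"all Left options" / "some Right option", because `max` and `min` commute with membership in a
lower set. By induction on `X`, the sums `G'' + X` and `G + X` therefore agree on these
memberships: the extra Right option `E + X` of `G + X` can land in `S` only if `D + X`, which is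
also a Right option of `G'' + X`, does. The outcome is determined by these memberships for
`Iic 0` and `Iio 0`.
-/

section LinearOrder

variable {α : Type*} [LinearOrder α] {S : Set α}

theorem IsLowerSet.max_mem_iff (hS : IsLowerSet S) {a b : α} : max a b ∈ S ↔ a ∈ S ∧ b ∈ S := by
  refine ⟨fun h => ⟨hS (le_max_left a b) h, hS (le_max_right a b) h⟩, fun ⟨ha, hb⟩ => ?_⟩
  rcases max_choice a b with e | e <;> rwa [e]

theorem IsLowerSet.min_mem_iff (hS : IsLowerSet S) {a b : α} : min a b ∈ S ↔ a ∈ S ∨ b ∈ S := by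
  refine ⟨fun h => ?_, fun h => h.elim (hS (min_le_left a b)) (hS (min_le_right a b))⟩
  rcases min_choice a b with e | e <;> rw [e] at h
  exacts [.inl h, .inr h]

end LinearOrder

namespace SGame

section LowerSet

variable {S : Set ℝ}

lemma maxRight_mem_iff (hS : IsLowerSet S) :
    ∀ (g : SGame) (t : List SGame), maxRight g t ∈ S ↔ ∀ h ∈ g :: t, rightScore h ∈ S
  | g, [] => by simp [maxRight]
  | g, h :: t => by
    rw [maxRight, hS.max_mem_iff, maxRight_mem_iff hS h t]
    simp only [List.forall_mem_cons]

lemma minLeft_mem_iff (hS : IsLowerSet S) :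
    ∀ (g : SGame) (t : List SGame), minLeft g t ∈ S ↔ ∃ h ∈ g :: t, leftScore h ∈ S
  | g, [] => by simp [minLeft]
  | g, h :: t => by
    rw [minLeft, hS.min_mem_iff, minLeft_mem_iff hS h t]
    simp only [List.exists_mem_cons_iff]

lemma leftScore_mem_iff (hS : IsLowerSet S) {L R : List SGame} {s : ℝ} (hL : L ≠ []) :
    leftScore (mk L R s) ∈ S ↔ ∀ g ∈ L, rightScore g ∈ S := by
  obtain ⟨g, t, rfl⟩ := List.exists_cons_of_ne_nil hL
  rw [leftScore, maxRight_mem_iff hS]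

lemma rightScore_mem_iff (hS : IsLowerSet S) {L R : List SGame} {s : ℝ} (hR : R ≠ []) :
    rightScore (mk L R s) ∈ S ↔ ∃ g ∈ R, leftScore g ∈ S := by
  obtain ⟨g, t, rfl⟩ := List.exists_cons_of_ne_nil hR
  rw [rightScore, minLeft_mem_iff hS]

end LowerSet

lemma mk_sum_mk (L₁ R₁ : List SGame) (s₁ : ℝ) (L₂ R₂ : List SGame) (s₂ : ℝ) :
    sum (mk L₁ R₁ s₁) (mk L₂ R₂ s₂) =
      mk (L₁.map (sum · (mk L₂ R₂ s₂)) ++ L₂.map (sum (mk L₁ R₁ s₁)))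
        (R₁.map (sum · (mk L₂ R₂ s₂)) ++ R₂.map (sum (mk L₁ R₁ s₁))) (s₁ + s₂) := by
  rw [sum]
  simp only [List.attach_map_val, List.attach_map_val (f := (sum · (mk L₂ R₂ s₂)))]

lemma outcome_eq_of_iff {G H : SGame}
    (hl : G.leftScore ≤ 0 ↔ H.leftScore ≤ 0) (hl' : G.leftScore < 0 ↔ H.leftScore < 0)
    (hr : G.rightScore ≤ 0 ↔ H.rightScore ≤ 0) (hr' : G.rightScore < 0 ↔ H.rightScore < 0) :
    G.outcome = H.outcome := by
  have pos_iff {a b : ℝ} (h : a ≤ 0 ↔ b ≤ 0) : 0 < a ↔ 0 < b := by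
    simpa only [not_le] using not_congr h
  have eq_zero_iff {a b : ℝ} (h : a ≤ 0 ↔ b ≤ 0) (h' : a < 0 ↔ b < 0) : a = 0 ↔ b = 0 := by
    rw [eq_iff_le_not_lt, eq_iff_le_not_lt, h, h']
  simp only [outcome, pos_iff hl, eq_zero_iff hl hl', pos_iff hr, eq_zero_iff hr hr']

theorem sum_scores_mem_iff_of_dominated {S : Set ℝ} (hS : IsLowerSet S) {L R R' : List SGame}
    {s : ℝ} (hsub : ∀ D ∈ R, D ∈ R')
    (hdom : ∀ E ∈ R', ∃ D ∈ R, ∀ X, (E.sum X).leftScore ∈ S → (D.sum X).leftScore ∈ S) :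
    ∀ X : SGame, (((mk L R s).sum X).leftScore ∈ S ↔ ((mk L R' s).sum X).leftScore ∈ S) ∧
      (((mk L R s).sum X).rightScore ∈ S ↔ ((mk L R' s).sum X).rightScore ∈ S)
  | mk XL XR xs => by
    have ih : ∀ x, x ∈ XL ∨ x ∈ XR →
        (((mk L R s).sum x).leftScore ∈ S ↔ ((mk L R' s).sum x).leftScore ∈ S) ∧
        (((mk L R s).sum x).rightScore ∈ S ↔ ((mk L R' s).sum x).rightScore ∈ S) :=
      fun x hx => sum_scores_mem_iff_of_dominated hS hsub hdom x
    have hR' : R' = [] ↔ R = [] := by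
      simp only [List.eq_nil_iff_forall_not_mem]
      exact ⟨fun h D hD => h D (hsub D hD), fun h E hE => (hdom E hE).elim fun D hD => h D hD.1⟩
    rw [mk_sum_mk, mk_sum_mk]
    constructor
    · by_cases hc : L = [] ∧ XL = []
      · obtain ⟨rfl, rfl⟩ := hc
        simp only [List.map_nil, List.append_nil, leftScore]
      · rw [leftScore_mem_iff hS (by simpa using hc), leftScore_mem_iff hS (by simpa using hc)]
        simp only [List.forall_mem_append, List.forall_mem_map]
        exact and_congr_right' (forall₂_congr fun x hx => (ih x (.inl hx)).2)
    · by_cases hc : R = [] ∧ XR = []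
      · obtain ⟨rfl, rfl⟩ := hc
        rw [hR'.mpr rfl]
      · rw [rightScore_mem_iff hS (by simpa using hc),
          rightScore_mem_iff hS (by simpa [hR'] using hc)]
        simp only [List.mem_append, or_and_right, exists_or, List.mem_map,
          exists_exists_and_eq_and]
        refine or_congr ?_ (exists_congr fun x => and_congr_right fun hx =>
          (ih x (.inr hx)).1)
        exact ⟨fun ⟨D, hD, hDX⟩ => ⟨D, hsub D hD, hDX⟩,
          fun ⟨E, hE, hEX⟩ => (hdom E hE).elim fun D ⟨hD, hDE⟩ => ⟨D, hD, hDE _ hEX⟩⟩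
termination_by X => X
decreasing_by
  rcases hx with hx | hx <;>
  · have := List.sizeOf_lt_of_mem hx
    simp only [mk.sizeOf_spec]
    omega

end SGame

/-- Removing a dominated Right option preserves equality: if `D ≤ E` then
`{A, B, C, … | s | D, F, …} = {A, B, C, … | s | D, E, F, …}`. -/
theorem remove_dominated_right (D E : SGame) (L Rrest : List SGame) (s : ℝ)
    (h : SGame.Le D E) :
    SGame.gameEq (SGame.mk L (D :: Rrest) s) (SGame.mk L (D :: E :: Rrest) s) := by
  have hsub : ∀ F ∈ D :: Rrest, F ∈ D :: E :: Rrest :=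
    List.cons_subset_cons D (List.subset_cons_self E Rrest)
  have hdom {S : Set ℝ} (hDE : ∀ X, (E.sum X).leftScore ∈ S → (D.sum X).leftScore ∈ S) :
      ∀ F ∈ D :: E :: Rrest, ∃ D' ∈ D :: Rrest,
        ∀ X, (F.sum X).leftScore ∈ S → (D'.sum X).leftScore ∈ S := by
    rintro F (_ | ⟨_, _ | ⟨_, hF⟩⟩)
    · exact ⟨D, List.mem_cons_self, fun _ => id⟩
    · exact ⟨D, List.mem_cons_self, hDE⟩
    · exact ⟨F, List.mem_cons_of_mem D hF, fun _ => id⟩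
  intro X
  obtain ⟨hl, hr⟩ := SGame.sum_scores_mem_iff_of_dominated (isLowerSet_Iic 0) (L := L) (s := s)
    hsub (hdom fun X => (h X).1) X
  obtain ⟨hl', hr'⟩ := SGame.sum_scores_mem_iff_of_dominated (isLowerSet_Iio 0) (L := L) (s := s)
    hsub (hdom fun X => (h X).2.2.1) X
  exact SGame.outcome_eq_of_iff hl hl' hr hr'
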